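/- For every positive integer p, ε_p > g(p) - g(p+1), where g(x) := (1/12)/(x + (1/18)/x). -/

import Mathlib

/-- Robbins' summand: `ε_p = (p + 1/2) log((p+1)/p) - 1`. -/
noncomputable def eps (p : ℕ) : ℝ :=
  ((p : ℝ) + 1/2) * Real.log (((p : ℝ) + 1) / p) - 1

/-- Depth-2 continued fraction with numerators `1/12` and `1/18`. -/
noncomputable def g (x : ℝ) : ℝ := (1/12) / (x + (1/18) / x)

/-- Series lower bound for `log((1+t)/(1-t))`. -/
lemma log_ratio_lb {t : ℝ} (ht : 0 ≤ t) (ht1 : t < 1) :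
    2*t + 2*t^3/3 + 2*t^5/5 ≤ Real.log (1+t) - Real.log (1-t) := by
  set f : ℝ → ℝ := fun s => Real.log (1+s) - Real.log (1-s) - (2*s + 2*s^3/3 + 2*s^5/5)
    with hf
  have hderiv : ∀ s ∈ Set.Icc (0:ℝ) t,
      HasDerivAt f ((1+s)⁻¹ + (1-s)⁻¹ - (2 + 2*s^2 + 2*s^4)) s := by
    intro s hs
    obtain ⟨hs0, hst⟩ := hs
    have h1p : (0:ℝ) < 1 + s := by linarith
    have h1m : (0:ℝ) < 1 - s := by linarith
    have hA : HasDerivAt (fun s : ℝ => 1 + s) 1 s := by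
      simpa using (hasDerivAt_id s).const_add 1
    have hB : HasDerivAt (fun s : ℝ => 1 - s) (-1) s := by
      simpa using (hasDerivAt_id s).const_sub 1
    have h1 : HasDerivAt (fun s : ℝ => Real.log (1+s)) ((1+s)⁻¹ * 1) s :=
      (Real.hasDerivAt_log h1p.ne').comp s hA
    have h2 : HasDerivAt (fun s : ℝ => Real.log (1-s)) ((1-s)⁻¹ * (-1)) s :=
      (Real.hasDerivAt_log h1m.ne').comp s hB
    have h3 : HasDerivAt (fun s : ℝ => 2*s + 2*s^3/3 + 2*s^5/5)
        (2 + 2*s^2 + 2*s^4) s := by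
      have p3 := (hasDerivAt_pow 3 s)
      have p5 := (hasDerivAt_pow 5 s)
      have := (((hasDerivAt_id s).const_mul 2).add
        (((p3.const_mul 2).div_const 3))).add ((p5.const_mul 2).div_const 5)
      exact this.congr_deriv (by norm_num; ring)
    have := (h1.sub h2).sub h3
    exact this.congr_deriv (by ring)
  have hpos : ∀ s ∈ Set.Icc (0:ℝ) t,
      0 ≤ (1+s)⁻¹ + (1-s)⁻¹ - (2 + 2*s^2 + 2*s^4) := by
    intro s hs
    obtain ⟨hs0, hst⟩ := hs
    have h1p : (0:ℝ) < 1 + s := by linarith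
    have h1m : (0:ℝ) < 1 - s := by linarith
    have e1 : (1+s)⁻¹ * (1+s) = 1 := inv_mul_cancel₀ h1p.ne'
    have e2 : (1-s)⁻¹ * (1-s) = 1 := inv_mul_cancel₀ h1m.ne'
    have hprod : (0:ℝ) < (1+s)*(1-s) := mul_pos h1p h1m
    have key : (1+s)⁻¹ + (1-s)⁻¹ = 2/((1+s)*(1-s)) := by
      field_simp
      ring
    have hle : (2 + 2*s^2 + 2*s^4) * ((1+s)*(1-s)) ≤ 2 := by
      nlinarith [pow_nonneg hs0 6]
    have := (le_div_iff₀ hprod).mpr hle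
    rw [key]
    linarith
  have hmono : MonotoneOn f (Set.Icc 0 t) := by
    apply monotoneOn_of_deriv_nonneg (convex_Icc 0 t)
    · exact fun s hs => (hderiv s hs).differentiableAt.continuousAt.continuousWithinAt
    · intro s hs
      exact ((hderiv s (interior_subset hs)).differentiableAt).differentiableWithinAt
    · intro s hs
      rw [(hderiv s (interior_subset hs)).deriv]
      exact hpos s (interior_subset hs)
  have h0 : f 0 = 0 := by simp [hf]
  have hft : f 0 ≤ f t :=
    hmono (Set.left_mem_Icc.mpr ht) (Set.right_mem_Icc.mpr ht) ht
  rw [h0] at hft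
  have : 0 ≤ Real.log (1+t) - Real.log (1-t) - (2*t + 2*t^3/3 + 2*t^5/5) := hft
  linarith

/-- For every positive integer `p`, `ε_p > g(p) - g(p+1)`. -/
theorem eps_gt_g_diff (p : ℕ) (hp : 0 < p) :
    eps p > g p - g ((p : ℝ) + 1) := by
  set x : ℝ := (p : ℝ) with hxdef
  have hx : (1:ℝ) ≤ x := by rw [hxdef]; exact_mod_cast hp
  have hx0 : (0:ℝ) < x := by linarith
  set t : ℝ := 1/(2*x+1) with htdef
  have h2x : (0:ℝ) < 2*x+1 := by linarith
  have ht0 : 0 ≤ t := by positivity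
  have ht1 : t < 1 := by
    rw [htdef, div_lt_one h2x]; linarith
  have hlog := log_ratio_lb ht0 ht1
  have h1mt : (0:ℝ) < 1 - t := by linarith
  have hratio : (x+1)/x = (1+t)/(1-t) := by
    rw [div_eq_div_iff hx0.ne' h1mt.ne', htdef]
    field_simp
    ring
  have h1pt : (0:ℝ) < 1 + t := by linarith
  have heps : eps p = (x + 1/2) * (Real.log (1+t) - Real.log (1-t)) - 1 := by
    rw [eps, ← hxdef, hratio, Real.log_div h1pt.ne' h1mt.ne']
  have hmul := mul_le_mul_of_nonneg_left hlog (by linarith : (0:ℝ) ≤ x + 1/2)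
  have hid : (x + 1/2) * (2*t + 2*t^3/3 + 2*t^5/5) - 1 = t^2/3 + t^4/5 := by
    rw [htdef]
    field_simp
    ring
  have hden1 : x + (1/18)/x ≠ 0 := by positivity
  have hx1 : (0:ℝ) < x + 1 := by linarith
  have hden2 : (x+1) + (1/18)/(x+1) ≠ 0 := by positivity
  have expand : t^2/3 + t^4/5 - (g x - g (x+1)) =
      (1728*x^4+3456*x^3+3500*x^2+1772*x+698) /
        (15*(2*x+1)^4*(36*x^2+2)*(36*(x+1)^2+2)) := by
    rw [g, g, htdef]
    field_simp
    ring
  have hnum : (0:ℝ) < 1728*x^4+3456*x^3+3500*x^2+1772*x+698 := by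
    have := pow_pos hx0 4
    have := pow_pos hx0 3
    have := pow_pos hx0 2
    linarith
  have hden : (0:ℝ) < 15*(2*x+1)^4*(36*x^2+2)*(36*(x+1)^2+2) := by
    have h1 : (0:ℝ) < (2*x+1)^4 := pow_pos h2x 4
    have h2 : (0:ℝ) < 36*x^2+2 := by positivity
    have h3 : (0:ℝ) < 36*(x+1)^2+2 := by positivity
    have : (0:ℝ) < 15*(2*x+1)^4 := by linarith
    exact mul_pos (mul_pos this h2) h3
  have hgap : 0 < t^2/3 + t^4/5 - (g x - g (x+1)) := by
    rw [expand]
    exact div_pos hnum hden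
  linarith
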